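/- Let A = (Q, δ, q_init, col) be a finite deterministic parity automaton over the alphabet {0,1} × {0,1} × {0,1} defining the relation R_A on triples of ω-sequences, let P ⊆ ℕ, and let G_{A,P} be the associated parity game. Then: (1) Player I has a winning strategy in G_{A,P} if and only if there is a strongly causal operator G : (ℕ → Bool) → (ℕ → Bool) such that (G Y, Y, χ_P) ∉ R_A for every Y; and (2) Player II has a winning strategy in G_{A,P} if and only if there is a causal operator F : (ℕ → Bool) → (ℕ → Bool) such that (X, F X, χ_P) ∈ R_A for every X. -/

import Mathlib

/-!
In round `n` of `G_{A,P}` Player I picks a bit `a n`, then Player II a bit `b n`, and the state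
component of the play moves along the run of `A` on `(a n, b n, χ_P n)`; so Player I wins a play
iff `A` rejects the word it spells. Playing a strategy against a fixed sequence of opponent bits
turns it into an operator: Player I moves first in each round, so his bit in round `n` depends only
on the opponent's bits before round `n`, while Player II's may also depend on the opponent's bit
in round `n`. Conversely, an operator becomes a strategy by applying it to the opponent's bits read
off the history, which by (strong) causality contains everything its value in that round depends on.
-/

open Classical in
/-- The characteristic ω-sequence of a set of natural numbers. -/
noncomputable def chi (P : Set ℕ) : ℕ → Bool := fun n => decide (n ∈ P)

/-- An operator `F` between ω-sequences is *causal* (a C-operator) if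
`F x t` depends only on `x 0, …, x t`. -/
def Causal {α β : Type} (F : (ℕ → α) → (ℕ → β)) : Prop :=
  ∀ x y : ℕ → α, ∀ t : ℕ, (∀ s ≤ t, x s = y s) → ∀ s ≤ t, F x s = F y s

/-- An operator `F` between ω-sequences is *strongly causal* (an SC-operator)
if `F x t` depends only on `x 0, …, x (t−1)`. -/
def StronglyCausal {α β : Type} (F : (ℕ → α) → (ℕ → β)) : Prop :=
  ∀ x y : ℕ → α, ∀ t : ℕ, (∀ s < t, x s = y s) → F x t = F y t

/-- Acceptance by a deterministic parity automaton `(Q, δ, q₀, col)`: the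
minimal color of a state visited infinitely often along the run on the
ω-word `a` is even. -/
def ParityAccepts {Q σ : Type*} (δ : Q → σ → Q) (q₀ : Q) (col : Q → ℕ)
    (a : ℕ → σ) : Prop :=
  Even (sInf {k | ∃ q, {n | ((List.range (n + 1)).map a).foldl δ q₀ = q}.Infinite ∧
    col q = k})

/-- Vertices of the game `G_{A,P}`: Player I vertices `Q × ℕ` and
Player II vertices `Q × Bool × ℕ`. -/
abbrev GVert (Q : Type) : Type := (Q × ℕ) ⊕ (Q × Bool × ℕ)

/-- The edge relation of the arena of `G_{A,P}`: from `(q, n)` to `(q, a, n)`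
for each `a : Bool`, and from `(q, a, n)` to `(δ q (a, b, c), n+1)` for each
`b : Bool`, where `c` tells whether `n ∈ P`. -/
def GameE {Q : Type} (δ : Q → Bool × Bool × Bool → Q) (P : Set ℕ)
    (u v : GVert Q) : Prop :=
  match u, v with
  | Sum.inl (q, n), Sum.inr (q', _, n') => q' = q ∧ n' = n
  | Sum.inr (q, a, n), Sum.inl (q', n') =>
      n' = n + 1 ∧ ∃ b : Bool, q' = δ q (a, b, chi P n)
  | _, _ => False

/-- The color of a vertex of `G_{A,P}` is `col` of its `Q`-component. -/
def GameCol {Q : Type} (col : Q → ℕ) : GVert Q → ℕ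
  | Sum.inl (q, _) => col q
  | Sum.inr (q, _, _) => col q

/-- An infinite play on an arena: an infinite `E`-path starting at `v₀`. -/
def IsPlay {V : Type*} (E : V → V → Prop) (v₀ : V) (π : ℕ → V) : Prop :=
  π 0 = v₀ ∧ ∀ n, E (π n) (π (n + 1))

/-- A finite play: a finite `E`-path starting at `v₀`, as a list. -/
def FinPlay {V : Type*} (E : V → V → Prop) (v₀ : V) (l : List V) : Prop :=
  l.head? = some v₀ ∧ l.Chain' E

/-- A strategy (for the player owning the vertices satisfying `mine`) is
legal if at every finite play ending in one of his vertices it chooses an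
edge-successor. -/
def LegalStrat {V : Type*} (E : V → V → Prop) (v₀ : V) (mine : V → Prop)
    (s : List V → V) : Prop :=
  ∀ (l : List V) (u : V), FinPlay E v₀ (l ++ [u]) → mine u → E u (s (l ++ [u]))

/-- A play is consistent with a strategy `s` of the player owning the
vertices satisfying `mine` if at each of his vertices the next vertex is the
one chosen by `s` on the finite play so far. -/
def ConsistentWith {V : Type*} (mine : V → Prop) (s : List V → V)
    (π : ℕ → V) : Prop :=
  ∀ n, mine (π n) → π (n + 1) = s ((List.range (n + 1)).map π)

/-- A play is winning for Player I iff the minimal color occurring infinitely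
often along it is odd. -/
def PlayerIWins {V : Type*} (c : V → ℕ) (π : ℕ → V) : Prop :=
  Odd (sInf {k | {n | c (π n) = k}.Infinite})

open Filter

theorem Nat.infinite_setOf_add_one_iff {p : ℕ → Prop} :
    {n | p (n + 1)}.Infinite ↔ {n | p n}.Infinite := by
  rw [← Nat.frequently_atTop_iff_infinite, ← Nat.frequently_atTop_iff_infinite,
    ← frequently_map (m := (· + 1)), map_add_atTop_eq_nat]

theorem Nat.infinite_setOf_div_two_iff {p : ℕ → Prop} :
    {n | p (n / 2)}.Infinite ↔ {n | p n}.Infinite := by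
  rw [← Nat.frequently_atTop_iff_infinite, ← Nat.frequently_atTop_iff_infinite,
    ← frequently_map (m := (· / 2)), map_div_atTop_eq_nat 2 two_pos]

theorem foldl_map_range_eq_of_recurrence {Q σ : Type*} {δ : Q → σ → Q} {a : ℕ → σ}
    {q : ℕ → Q} (hq : ∀ n, q (n + 1) = δ (q n) (a n)) (n : ℕ) :
    ((List.range (n + 1)).map a).foldl δ (q 0) = q (n + 1) := by
  induction n with
  | zero => simp [hq]
  | succ n ih => rw [List.range_succ, List.map_append, List.foldl_append, ih]; simp [hq]

theorem parityAccepts_iff_of_run {Q σ : Type*} [Finite Q] {δ : Q → σ → Q} {col : Q → ℕ}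
    {a : ℕ → σ} {q : ℕ → Q} (hq : ∀ n, q (n + 1) = δ (q n) (a n)) :
    ParityAccepts δ (q 0) col a ↔ Even (sInf {k | {n | col (q n) = k}.Infinite}) := by
  have hcol (k : ℕ) :
      {n | col (q n) = k}.Infinite ↔ ∃ q', {n | q n = q'}.Infinite ∧ col q' = k := by
    simp only [← Nat.frequently_atTop_iff_infinite, ← frequently_and_distrib_right,
      ← frequently_exists]
    exact frequently_congr (.of_forall fun n => by simp)
  have hshift (q' : Q) : {n | q (n + 1) = q'}.Infinite ↔ {n | q n = q'}.Infinite :=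
    Nat.infinite_setOf_add_one_iff (p := (q · = q'))
  simp only [ParityAccepts, foldl_map_range_eq_of_recurrence hq, hshift, hcol]

section Outcome

variable {V : Type*}

theorem LegalStrat.mono {E : V → V → Prop} {v₀ : V} {mine mine' : V → Prop}
    {s : List V → V} (hs : LegalStrat E v₀ mine s) (h : ∀ u, mine' u → mine u) :
    LegalStrat E v₀ mine' s :=
  fun l u hl hu => hs l u hl (h u hu)

theorem ConsistentWith.mono {mine mine' : V → Prop} {s : List V → V} {π : ℕ → V}
    (hc : ConsistentWith mine s π) (h : ∀ u, mine' u → mine u) : ConsistentWith mine' s π :=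
  fun n hn => hc n (h _ hn)

theorem List.getLastD_map_range (π : ℕ → V) (d : V) (n : ℕ) :
    ((List.range (n + 1)).map π).getLastD d = π n := by
  rw [List.range_succ, List.map_append, List.map_singleton, List.getLastD_concat]

theorem List.getD_map_range_of_lt {π : ℕ → V} {d : V} {m i : ℕ} (hi : i < m) :
    ((List.range m).map π).getD i d = π i := by
  rw [List.getD_eq_getElem _ _ (by simpa), List.getElem_map, List.getElem_range]

theorem finPlay_map_range {E : V → V → Prop} {v₀ : V} {π : ℕ → V} {n : ℕ}
    (h0 : π 0 = v₀) (hE : ∀ k < n, E (π k) (π (k + 1))) :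
    FinPlay E v₀ ((List.range (n + 1)).map π) :=
  ⟨by simp [List.range_succ_eq_map, h0],
    (List.isChain_map π).2 ((List.isChain_range_succ _ n).2 hE)⟩

variable (v₀ : V)

def histOf (next : List V → V) : ℕ → List V
  | 0 => [v₀]
  | n + 1 => histOf next n ++ [next (histOf next n)]

def playOf (next : List V → V) (n : ℕ) : V := (histOf v₀ next n).getLastD v₀

variable {v₀}

theorem map_range_playOf (next : List V → V) (n : ℕ) :
    (List.range (n + 1)).map (playOf v₀ next) = histOf v₀ next n := by
  induction n with
  | zero => rfl
  | succ n ih =>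
    rw [List.range_succ, List.map_append, ih, List.map_singleton, histOf, playOf, histOf,
      List.getLastD_concat]

theorem playOf_succ (next : List V → V) (n : ℕ) :
    playOf v₀ next (n + 1) = next ((List.range (n + 1)).map (playOf v₀ next)) := by
  rw [map_range_playOf, playOf, histOf, List.getLastD_concat]

theorem isPlay_playOf {E : V → V → Prop} {next : List V → V}
    (h : LegalStrat E v₀ (fun _ => True) next) : IsPlay E v₀ (playOf v₀ next) := by
  refine ⟨rfl, fun n => ?_⟩
  induction n using Nat.strong_induction_on with
  | _ n ih =>
    have hfin := finPlay_map_range (E := E) (rfl : playOf v₀ next 0 = v₀) ih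
    rw [List.range_succ, List.map_append, List.map_singleton] at hfin
    rw [playOf_succ, List.range_succ, List.map_append, List.map_singleton]
    exact h _ _ hfin trivial

theorem playOf_congr {next next' : List V → V} {m : ℕ}
    (h : ∀ n < m, next ((List.range (n + 1)).map (playOf v₀ next)) =
      next' ((List.range (n + 1)).map (playOf v₀ next))) :
    ∀ k ≤ m, playOf v₀ next k = playOf v₀ next' k := by
  induction m with
  | zero => intro k hk; obtain rfl := Nat.le_zero.1 hk; rfl
  | succ m ih =>
    intro k hk
    rcases Nat.lt_or_eq_of_le hk with hk | rfl
    · exact ih (fun n hn => h n (by omega)) k (by omega)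
    · have hpre : (List.range (m + 1)).map (playOf v₀ next) =
          (List.range (m + 1)).map (playOf v₀ next') :=
        List.map_congr_left fun i hi => ih (fun n hn => h n (by omega)) i
          (Nat.lt_succ_iff.1 (List.mem_range.1 hi))
      rw [playOf_succ, playOf_succ, h m (by omega), hpre]

variable (v₀) (mine : V → Prop) [DecidablePred mine]

def outcome (s t : List V → V) : ℕ → V :=
  playOf v₀ fun l => if mine (l.getLastD v₀) then s l else t l

variable {v₀ mine}

theorem outcome_succ (s t : List V → V) (n : ℕ) :
    outcome v₀ mine s t (n + 1) =
      if mine (outcome v₀ mine s t n) then s ((List.range (n + 1)).map (outcome v₀ mine s t))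
      else t ((List.range (n + 1)).map (outcome v₀ mine s t)) := by
  rw [outcome, playOf_succ, List.getLastD_map_range]

theorem isPlay_outcome {E : V → V → Prop} {s t : List V → V} (hs : LegalStrat E v₀ mine s)
    (ht : LegalStrat E v₀ (fun u => ¬ mine u) t) : IsPlay E v₀ (outcome v₀ mine s t) := by
  refine isPlay_playOf fun l u hl _ => ?_
  simp only [List.getLastD_concat]
  split_ifs with hu
  exacts [hs l u hl hu, ht l u hl hu]

theorem consistentWith_outcome_left (s t : List V → V) :
    ConsistentWith mine s (outcome v₀ mine s t) :=
  fun n hn => by rw [outcome_succ, if_pos hn]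

theorem consistentWith_outcome_right (s t : List V → V) :
    ConsistentWith (fun u => ¬ mine u) t (outcome v₀ mine s t) :=
  fun n hn => by rw [outcome_succ, if_neg hn]

theorem outcome_congr_right {s t t' : List V → V} {m : ℕ}
    (h : ∀ n < m, ¬ mine (outcome v₀ mine s t n) →
      t ((List.range (n + 1)).map (outcome v₀ mine s t)) =
        t' ((List.range (n + 1)).map (outcome v₀ mine s t))) :
    ∀ k ≤ m, outcome v₀ mine s t k = outcome v₀ mine s t' k := by
  refine playOf_congr fun n hn => ?_
  simp only [List.getLastD_map_range]
  split_ifs with hmine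
  · rfl
  · exact h n hn hmine

end Outcome

section Game

variable {Q : Type} {δ : Q → Bool × Bool × Bool → Q} {qinit : Q} {P : Set ℕ}

theorem gameE_inl_iff {q : Q} {n : ℕ} {v : GVert Q} :
    GameE δ P (.inl (q, n)) v ↔ ∃ a, v = .inr (q, a, n) := by
  rcases v with ⟨q', n'⟩ | ⟨q', a, n'⟩ <;> simp [GameE, eq_comm]

theorem gameE_inr_iff {q : Q} {a : Bool} {n : ℕ} {v : GVert Q} :
    GameE δ P (.inr (q, a, n)) v ↔ ∃ b, v = .inl (δ q (a, b, chi P n), n + 1) := by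
  rcases v with ⟨q', n'⟩ | ⟨q', a', n'⟩ <;> simp [GameE, and_comm, eq_comm]

def vertexState : GVert Q → Q
  | .inl (q, _) => q
  | .inr (q, _, _) => q

def vertexBit : GVert Q → Bool
  | .inl _ => false
  | .inr (_, a, _) => a

def stateAt (π : ℕ → GVert Q) (n : ℕ) : Q := vertexState (π (2 * n))

def moveI (π : ℕ → GVert Q) (n : ℕ) : Bool := vertexBit (π (2 * n + 1))

variable (δ P) in
open Classical in
/-- Player II's bit is not recorded in the play, only the state it leads to; we read it as
`true` whenever `true` leads there. -/
noncomputable def moveII (π : ℕ → GVert Q) (n : ℕ) : Bool :=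
  decide (stateAt π (n + 1) = δ (stateAt π n) (moveI π n, true, chi P n))

theorem moveII_spec {π : ℕ → GVert Q} {n : ℕ}
    (h : ∃ b, stateAt π (n + 1) = δ (stateAt π n) (moveI π n, b, chi P n)) :
    stateAt π (n + 1) = δ (stateAt π n) (moveI π n, moveII δ P π n, chi P n) := by
  obtain ⟨b, hb⟩ := h
  by_cases ht : stateAt π (n + 1) = δ (stateAt π n) (moveI π n, true, chi P n)
  · simp [moveII, ht]
  · cases b
    · simpa [moveII, ht] using hb
    · exact absurd hb ht

theorem moveII_congr {π π' : ℕ → GVert Q} {n : ℕ} (h : ∀ i ≤ 2 * n + 2, π i = π' i) :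
    moveII δ P π n = moveII δ P π' n := by
  rw [moveII, moveII, stateAt, stateAt, stateAt, stateAt, moveI, moveI, h (2 * n) (by omega),
    h (2 * n + 1) (by omega), show 2 * (n + 1) = 2 * n + 2 by ring, h (2 * n + 2) le_rfl]

namespace IsPlay

variable {π : ℕ → GVert Q} (hπ : IsPlay (GameE δ P) (.inl (qinit, 0)) π)
include hπ

theorem eq_inr_of_eq_inl {n : ℕ} {q : Q} (h : π (2 * n) = .inl (q, n)) :
    π (2 * n + 1) = .inr (q, moveI π n, n) := by
  have hE := hπ.2 (2 * n)
  rw [h, gameE_inl_iff] at hE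
  obtain ⟨a, ha⟩ := hE
  rw [moveI, ha]
  rfl

theorem eq_inl (n : ℕ) : π (2 * n) = .inl (stateAt π n, n) := by
  induction n with
  | zero => rw [stateAt, Nat.mul_zero, hπ.1]; rfl
  | succ n ih =>
    have hE := hπ.2 (2 * n + 1)
    rw [hπ.eq_inr_of_eq_inl ih, gameE_inr_iff] at hE
    obtain ⟨b, hb⟩ := hE
    rw [stateAt, show 2 * (n + 1) = 2 * n + 1 + 1 by ring, hb]
    rfl

theorem eq_inr (n : ℕ) : π (2 * n + 1) = .inr (stateAt π n, moveI π n, n) :=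
  hπ.eq_inr_of_eq_inl (hπ.eq_inl n)

theorem stateAt_zero : stateAt π 0 = qinit := by
  simp [stateAt, hπ.1, vertexState]

theorem stateAt_succ (n : ℕ) :
    stateAt π (n + 1) = δ (stateAt π n) (moveI π n, moveII δ P π n, chi P n) := by
  refine moveII_spec ?_
  have hE := hπ.2 (2 * n + 1)
  rw [hπ.eq_inr, show 2 * n + 1 + 1 = 2 * (n + 1) by ring, hπ.eq_inl, gameE_inr_iff] at hE
  obtain ⟨b, hb⟩ := hE
  exact ⟨b, (Prod.ext_iff.1 (Sum.inl.inj hb)).1⟩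

theorem gameCol_eq (col : Q → ℕ) (n : ℕ) : GameCol col (π n) = col (stateAt π (n / 2)) := by
  obtain ⟨k, rfl | rfl⟩ := Nat.even_or_odd' n
  · rw [hπ.eq_inl, show 2 * k / 2 = k by omega]; rfl
  · rw [hπ.eq_inr, show (2 * k + 1) / 2 = k by omega]; rfl

theorem playerIWins_iff [Finite Q] (col : Q → ℕ) {w : ℕ → Bool × Bool × Bool}
    (hw : ∀ n, stateAt π (n + 1) = δ (stateAt π n) (w n)) :
    PlayerIWins (GameCol col) π ↔ ¬ ParityAccepts δ qinit col w := by
  have hcol (k : ℕ) : {n | GameCol col (π n) = k}.Infinite ↔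
      {n | col (stateAt π n) = k}.Infinite := by
    simp only [hπ.gameCol_eq]
    exact Nat.infinite_setOf_div_two_iff (p := fun m => col (stateAt π m) = k)
  rw [PlayerIWins, ← hπ.stateAt_zero, parityAccepts_iff_of_run hw, Nat.not_even_iff_odd]
  simp only [hcol]

end IsPlay

end Game

section Strategies

variable {Q : Type} (δ : Q → Bool × Bool × Bool → Q) (qinit : Q) (P : Set ℕ)

noncomputable def strategyI (G : (ℕ → Bool) → ℕ → Bool) (l : List (GVert Q)) : GVert Q :=
  match l.getLastD (.inl (qinit, 0)) with
  | .inl (q, n) => .inr (q, G (moveII δ P (l.getD · (.inl (qinit, 0)))) n, n)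
  | v => v

noncomputable def strategyII (F : (ℕ → Bool) → ℕ → Bool) (l : List (GVert Q)) : GVert Q :=
  match l.getLastD (.inl (qinit, 0)) with
  | .inr (q, a, n) => .inl (δ q (a, F (moveI (l.getD · (.inl (qinit, 0)))) n, chi P n), n + 1)
  | v => v

theorem legalStrat_strategyI (G : (ℕ → Bool) → ℕ → Bool) :
    LegalStrat (GameE δ P) (.inl (qinit, 0)) (fun u => u.isLeft = true)
      (strategyI δ qinit P G) := by
  rintro l (⟨q, n⟩ | _) - hu
  · simp [strategyI, GameE]
  · simp at hu

theorem legalStrat_strategyII (F : (ℕ → Bool) → ℕ → Bool) :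
    LegalStrat (GameE δ P) (.inl (qinit, 0)) (fun u => u.isRight = true)
      (strategyII δ qinit P F) := by
  rintro l (_ | ⟨q, a, n⟩) - hu
  · simp at hu
  · simp only [strategyII, List.getLastD_concat]
    exact ⟨rfl, _, rfl⟩

variable {δ qinit P} {π : ℕ → GVert Q}

theorem IsPlay.strategyI_map_range (hπ : IsPlay (GameE δ P) (.inl (qinit, 0)) π)
    (G : (ℕ → Bool) → ℕ → Bool) (n : ℕ) :
    strategyI δ qinit P G ((List.range (2 * n + 1)).map π) =
      .inr (stateAt π n,
        G (moveII δ P (((List.range (2 * n + 1)).map π).getD · (.inl (qinit, 0)))) n, n) := by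
  rw [strategyI, List.getLastD_map_range, hπ.eq_inl]

theorem IsPlay.strategyII_map_range (hπ : IsPlay (GameE δ P) (.inl (qinit, 0)) π)
    (F : (ℕ → Bool) → ℕ → Bool) (n : ℕ) :
    strategyII δ qinit P F ((List.range (2 * n + 1 + 1)).map π) =
      .inl (δ (stateAt π n) (moveI π n,
        F (moveI (((List.range (2 * n + 1 + 1)).map π).getD · (.inl (qinit, 0)))) n, chi P n),
        n + 1) := by
  rw [strategyII, List.getLastD_map_range, hπ.eq_inr]

theorem IsPlay.moveI_eq_of_consistentWith_strategyI
    (hπ : IsPlay (GameE δ P) (.inl (qinit, 0)) π)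
    {G : (ℕ → Bool) → ℕ → Bool} (hG : StronglyCausal G)
    (hc : ConsistentWith (fun u => u.isLeft = true) (strategyI δ qinit P G) π) :
    moveI π = G (moveII δ P π) := by
  funext n
  have h := hc (2 * n) (by rw [hπ.eq_inl]; rfl)
  rw [hπ.eq_inr, hπ.strategyI_map_range, Sum.inr.injEq, Prod.mk.injEq, Prod.mk.injEq] at h
  rw [h.2.1]
  exact hG _ _ n fun k hk => moveII_congr fun i hi => List.getD_map_range_of_lt (by omega)

theorem IsPlay.stateAt_succ_of_consistentWith_strategyII
    (hπ : IsPlay (GameE δ P) (.inl (qinit, 0)) π)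
    {F : (ℕ → Bool) → ℕ → Bool} (hF : Causal F)
    (hc : ConsistentWith (fun u => u.isRight = true) (strategyII δ qinit P F) π) (n : ℕ) :
    stateAt π (n + 1) = δ (stateAt π n) (moveI π n, F (moveI π) n, chi P n) := by
  have h := hc (2 * n + 1) (by rw [hπ.eq_inr]; rfl)
  have hnext : π (2 * n + 1 + 1) = .inl (stateAt π (n + 1), n + 1) := hπ.eq_inl (n + 1)
  rw [hπ.strategyII_map_range, hnext, Sum.inl.injEq, Prod.mk.injEq] at h
  rw [h.1]
  congr 3
  exact hF _ _ n (fun k hk => congrArg vertexBit (List.getD_map_range_of_lt (by omega))) n le_rfl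

end Strategies

section Reduction

variable {Q : Type} [Finite Q] {δ : Q → Bool × Bool × Bool → Q} {qinit : Q} {col : Q → ℕ}
  {P : Set ℕ}

theorem playerIWins_of_consistentWith_strategyI {G : (ℕ → Bool) → ℕ → Bool}
    (hG : StronglyCausal G)
    (hGA : ∀ Y, ¬ ParityAccepts δ qinit col (fun n => (G Y n, Y n, chi P n)))
    {π : ℕ → GVert Q} (hπ : IsPlay (GameE δ P) (.inl (qinit, 0)) π)
    (hc : ConsistentWith (fun u => u.isLeft = true) (strategyI δ qinit P G) π) :
    PlayerIWins (GameCol col) π := by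
  refine (hπ.playerIWins_iff col fun n => ?_).2 (hGA (moveII δ P π))
  rw [hπ.stateAt_succ, hπ.moveI_eq_of_consistentWith_strategyI hG hc]

theorem not_playerIWins_of_consistentWith_strategyII {F : (ℕ → Bool) → ℕ → Bool}
    (hF : Causal F)
    (hFA : ∀ X, ParityAccepts δ qinit col (fun n => (X n, F X n, chi P n)))
    {π : ℕ → GVert Q} (hπ : IsPlay (GameE δ P) (.inl (qinit, 0)) π)
    (hc : ConsistentWith (fun u => u.isRight = true) (strategyII δ qinit P F) π) :
    ¬ PlayerIWins (GameCol col) π :=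
  fun hwin =>
    (hπ.playerIWins_iff col (hπ.stateAt_succ_of_consistentWith_strategyII hF hc)).1 hwin
      (hFA (moveI π))

theorem exists_stronglyCausal_of_winning_strategyI {s : List (GVert Q) → GVert Q}
    (hs : LegalStrat (GameE δ P) (.inl (qinit, 0)) (fun u => u.isLeft = true) s)
    (hwin : ∀ π, IsPlay (GameE δ P) (.inl (qinit, 0)) π →
      ConsistentWith (fun u => u.isLeft = true) s π → PlayerIWins (GameCol col) π) :
    ∃ G : (ℕ → Bool) → (ℕ → Bool), StronglyCausal G ∧
      ∀ Y, ¬ ParityAccepts δ qinit col (fun n => (G Y n, Y n, chi P n)) := by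
  set π : (ℕ → Bool) → ℕ → GVert Q := fun Y =>
    outcome (.inl (qinit, 0)) (fun u => u.isLeft = true) s (strategyII δ qinit P fun _ => Y)
  have hplay Y : IsPlay (GameE δ P) (.inl (qinit, 0)) (π Y) :=
    isPlay_outcome hs ((legalStrat_strategyII δ qinit P _).mono (by simp))
  refine ⟨fun Y => moveI (π Y), fun Y Y' t hYY' => ?_, fun Y => ?_⟩
  · refine congrArg vertexBit (outcome_congr_right (fun n hn hnI => ?_) _ le_rfl)
    obtain ⟨k, rfl | rfl⟩ := Nat.even_or_odd' n
    · change ¬ (π Y (2 * k)).isLeft = true at hnI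
      simp [(hplay Y).eq_inl] at hnI
    · rw [(hplay Y).strategyII_map_range, (hplay Y).strategyII_map_range, hYY' k (by omega)]
  · refine ((hplay Y).playerIWins_iff col fun n => ?_).1
      (hwin _ (hplay Y) (consistentWith_outcome_left _ _))
    exact (hplay Y).stateAt_succ_of_consistentWith_strategyII (fun _ _ _ _ _ _ => rfl)
      ((consistentWith_outcome_right _ _).mono (by simp)) n

theorem exists_causal_of_winning_strategyII {s : List (GVert Q) → GVert Q}
    (hs : LegalStrat (GameE δ P) (.inl (qinit, 0)) (fun u => u.isRight = true) s)
    (hwin : ∀ π, IsPlay (GameE δ P) (.inl (qinit, 0)) π →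
      ConsistentWith (fun u => u.isRight = true) s π → ¬ PlayerIWins (GameCol col) π) :
    ∃ F : (ℕ → Bool) → (ℕ → Bool), Causal F ∧
      ∀ X, ParityAccepts δ qinit col (fun n => (X n, F X n, chi P n)) := by
  set π : (ℕ → Bool) → ℕ → GVert Q := fun X =>
    outcome (.inl (qinit, 0)) (fun u => u.isRight = true) s (strategyI δ qinit P fun _ => X)
  have hplay X : IsPlay (GameE δ P) (.inl (qinit, 0)) (π X) :=
    isPlay_outcome hs ((legalStrat_strategyI δ qinit P _).mono (by simp))
  have hmoveI X : moveI (π X) = X :=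
    (hplay X).moveI_eq_of_consistentWith_strategyI (fun _ _ _ _ => rfl)
      ((consistentWith_outcome_right _ _).mono (by simp))
  refine ⟨fun X => moveII δ P (π X), fun X X' t hXX' u hu => ?_, fun X => ?_⟩
  · refine moveII_congr fun i hi => outcome_congr_right (fun n hn hnII => ?_) i
      (show i ≤ 2 * t + 2 by omega)
    obtain ⟨k, rfl | rfl⟩ := Nat.even_or_odd' n
    · rw [(hplay X).strategyI_map_range, (hplay X).strategyI_map_range, hXX' k (by omega)]
    · change ¬ (π X (2 * k + 1)).isRight = true at hnII
      simp [(hplay X).eq_inr] at hnII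
  · have hword n : stateAt (π X) (n + 1) =
        δ (stateAt (π X) n) (X n, moveII δ P (π X) n, chi P n) := by
      rw [(hplay X).stateAt_succ, hmoveI]
    by_contra hA
    exact hwin _ (hplay X) (consistentWith_outcome_left _ _)
      (((hplay X).playerIWins_iff col hword).2 hA)

end Reduction

/-- Correctness of the reduction to the parity game `G_{A,P}`:
(1) Player I has a winning strategy in `G_{A,P}` iff some strongly causal
operator `G` satisfies `(G Y, Y, χ_P) ∉ R_A` for every `Y`; and
(2) Player II has a winning strategy in `G_{A,P}` iff some causal operator
`F` satisfies `(X, F X, χ_P) ∈ R_A` for every `X`. -/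
theorem game_iff_operators {Q : Type} [Fintype Q]
    (δ : Q → Bool × Bool × Bool → Q) (qinit : Q) (col : Q → ℕ) (P : Set ℕ) :
    ((∃ s : List (GVert Q) → GVert Q,
        LegalStrat (GameE δ P) (Sum.inl (qinit, 0)) (fun u => u.isLeft = true) s ∧
        ∀ π : ℕ → GVert Q, IsPlay (GameE δ P) (Sum.inl (qinit, 0)) π →
          ConsistentWith (fun u => u.isLeft = true) s π →
          PlayerIWins (GameCol col) π) ↔
      (∃ G : (ℕ → Bool) → (ℕ → Bool), StronglyCausal G ∧
        ∀ Y : ℕ → Bool,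
          ¬ ParityAccepts δ qinit col (fun n => (G Y n, Y n, chi P n)))) ∧
    ((∃ s : List (GVert Q) → GVert Q,
        LegalStrat (GameE δ P) (Sum.inl (qinit, 0)) (fun u => u.isRight = true) s ∧
        ∀ π : ℕ → GVert Q, IsPlay (GameE δ P) (Sum.inl (qinit, 0)) π →
          ConsistentWith (fun u => u.isRight = true) s π →
          ¬ PlayerIWins (GameCol col) π) ↔
      (∃ F : (ℕ → Bool) → (ℕ → Bool), Causal F ∧
        ∀ X : ℕ → Bool,
          ParityAccepts δ qinit col (fun n => (X n, F X n, chi P n)))) := by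
  refine ⟨⟨fun ⟨s, hs, hwin⟩ => exists_stronglyCausal_of_winning_strategyI hs hwin, ?_⟩,
    ⟨fun ⟨s, hs, hwin⟩ => exists_causal_of_winning_strategyII hs hwin, ?_⟩⟩
  · rintro ⟨G, hG, hGA⟩
    exact ⟨strategyI δ qinit P G, legalStrat_strategyI δ qinit P G,
      fun π hπ hc => playerIWins_of_consistentWith_strategyI hG hGA hπ hc⟩
  · rintro ⟨F, hF, hFA⟩
    exact ⟨strategyII δ qinit P F, legalStrat_strategyII δ qinit P F,
      fun π hπ hc => not_playerIWins_of_consistentWith_strategyII hF hFA hπ hc⟩
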